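/- arXiv:1306.5016 — 2 statements merged into one kernel-verified Lean document; each statement's English description precedes it below -/
import Mathlib

section
/- Let d ≥ 1, α ∈ (0,2), and let ν_S be a measure on (0,∞) such that for some C ≥ 1 and all ε ∈ (0,1], ∫_{(0,ε]} u ν_S(du) ≤ C ε^{1-α/2} and ν_S([ε,∞)) ≤ C ε^{-α/2}. Define the measure ν_L on ℝ^d by ν_L(E) = ∫₀^∞ ∫_E (2πu)^{-d/2} e^{-|z|²/(2u)} dz ν_S(du). Then there exists C₀ ≥ 1 such that for all δ ∈ (0,1), ∫_{|z|≥δ} ν_L(dz) ≤ C₀ δ^{-α}. -/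
/-!
Split the mixing integral at `u = δ²`. A Gaussian of variance `u` has total mass one,
so the range `u > δ²` contributes at most `ν_S([δ², ∞)) ≤ C δ^{-α}`. For `u ≤ δ²`, the
bound `exp (-t) ≤ t⁻¹` applied to half of the exponent shows that the Gaussian of variance
`u` puts mass at most `4 · 2^{d/2} u / δ²` outside the ball of radius `δ`, so this range
contributes at most `4 · 2^{d/2} δ⁻² ∫_{(0, δ²]} u ν_S(du) ≤ 4 · 2^{d/2} C δ^{-α}`.
-/

open MeasureTheory Set ENNReal Real Module

section Gaussian

variable (V : Type*) [NormedAddCommGroup V] [InnerProductSpace ℝ V]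

noncomputable def gaussianDensity (u : ℝ) (z : V) : ℝ :=
  (2 * π * u) ^ (-(finrank ℝ V : ℝ) / 2) * exp (-‖z‖ ^ 2 / (2 * u))

theorem gaussianDensity_euclideanSpace (d : ℕ) (u : ℝ) (z : EuclideanSpace ℝ (Fin d)) :
    gaussianDensity (EuclideanSpace ℝ (Fin d)) u z
      = (2 * π * u) ^ (-(d : ℝ) / 2) * exp (-‖z‖ ^ 2 / (2 * u)) := by
  rw [gaussianDensity, finrank_euclideanSpace_fin]

variable {V}

theorem gaussianDensity_nonneg {u : ℝ} (hu : 0 ≤ u) (z : V) : 0 ≤ gaussianDensity V u z := by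
  unfold gaussianDensity; positivity

theorem gaussianDensity_le_of_le_norm {u δ : ℝ} (hu : 0 < u) (hδ : 0 < δ) {z : V}
    (hz : δ ≤ ‖z‖) :
    gaussianDensity V u z
      ≤ 2 ^ ((finrank ℝ V : ℝ) / 2) * (4 * u / δ ^ 2) * gaussianDensity V (2 * u) z := by
  have ht : δ ^ 2 / (4 * u) ≤ ‖z‖ ^ 2 / (4 * u) := by gcongr
  set t := ‖z‖ ^ 2 / (4 * u)
  have ht0 : 0 < t := lt_of_lt_of_le (by positivity) ht
  have hexp : exp (-t) ≤ 4 * u / δ ^ 2 :=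
    calc exp (-t) ≤ t⁻¹ := by
          rw [exp_neg]; exact inv_anti₀ ht0 (by linarith [add_one_le_exp t])
      _ ≤ (δ ^ 2 / (4 * u))⁻¹ := inv_anti₀ (by positivity) ht
      _ = 4 * u / δ ^ 2 := inv_div _ _
  have hnorm : (2 * π * u) ^ (-(finrank ℝ V : ℝ) / 2)
      = 2 ^ ((finrank ℝ V : ℝ) / 2) * (2 * π * (2 * u)) ^ (-(finrank ℝ V : ℝ) / 2) := by
    have hπu : 0 ≤ 2 * π * u := by positivity
    rw [show 2 * π * (2 * u) = 2 * (2 * π * u) by ring, mul_rpow zero_le_two hπu, ← mul_assoc,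
      ← rpow_add two_pos, neg_div, add_neg_cancel, Real.rpow_zero, one_mul]
  have hsplit : exp (-‖z‖ ^ 2 / (2 * u)) = exp (-t) * exp (-‖z‖ ^ 2 / (2 * (2 * u))) := by
    rw [← exp_add]; congr 1; ring
  calc gaussianDensity V u z
      = 2 ^ ((finrank ℝ V : ℝ) / 2) * (exp (-t) * gaussianDensity V (2 * u) z) := by
        rw [gaussianDensity, gaussianDensity, hnorm, hsplit]; ring
    _ ≤ 2 ^ ((finrank ℝ V : ℝ) / 2) * (4 * u / δ ^ 2 * gaussianDensity V (2 * u) z) := by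
        gcongr; exact gaussianDensity_nonneg (by positivity) z
    _ = _ := by ring

variable [FiniteDimensional ℝ V] [MeasurableSpace V] [BorelSpace V]

theorem integral_gaussianDensity {u : ℝ} (hu : 0 < u) : ∫ z, gaussianDensity V u z = 1 := by
  have hb : 0 < (2 * u)⁻¹ := by positivity
  have hexp (z : V) : exp (-‖z‖ ^ 2 / (2 * u)) = exp (-(2 * u)⁻¹ * ‖z‖ ^ 2) := by
    congr 1; ring
  simp_rw [gaussianDensity, hexp, integral_const_mul]
  rw [GaussianFourier.integral_rexp_neg_mul_sq_norm hb, div_inv_eq_mul,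
    show π * (2 * u) = 2 * π * u by ring, ← rpow_add (by positivity), neg_div, neg_add_cancel,
    Real.rpow_zero]

theorem lintegral_gaussianDensity {u : ℝ} (hu : 0 < u) :
    ∫⁻ z, ENNReal.ofReal (gaussianDensity V u z) = 1 := by
  have h := integral_gaussianDensity (V := V) hu
  rw [← ofReal_integral_eq_lintegral_ofReal (Integrable.of_integral_ne_zero (by simp [h]))
    (ae_of_all _ (gaussianDensity_nonneg hu.le)), h, ofReal_one]

theorem setLIntegral_gaussianDensity_le_one {u : ℝ} (hu : 0 < u) (s : Set V) :
    ∫⁻ z in s, ENNReal.ofReal (gaussianDensity V u z) ≤ 1 :=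
  (setLIntegral_le_lintegral _ _).trans_eq (lintegral_gaussianDensity hu)

theorem setLIntegral_gaussianDensity_le_norm_le {u δ : ℝ} (hu : 0 < u) (hδ : 0 < δ) :
    ∫⁻ z in {z : V | δ ≤ ‖z‖}, ENNReal.ofReal (gaussianDensity V u z)
      ≤ ENNReal.ofReal (4 * 2 ^ ((finrank ℝ V : ℝ) / 2) / δ ^ 2 * u) := by
  set c := 2 ^ ((finrank ℝ V : ℝ) / 2) * (4 * u / δ ^ 2)
  have hc : 0 ≤ c := by positivity
  calc ∫⁻ z in {z : V | δ ≤ ‖z‖}, ENNReal.ofReal (gaussianDensity V u z)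
      ≤ ∫⁻ z in {z : V | δ ≤ ‖z‖},
          ENNReal.ofReal c * ENNReal.ofReal (gaussianDensity V (2 * u) z) :=
        setLIntegral_mono' (measurableSet_le measurable_const measurable_norm) fun z hz ↦ by
          rw [← ofReal_mul hc]; exact ofReal_le_ofReal (gaussianDensity_le_of_le_norm hu hδ hz)
    _ ≤ ∫⁻ z, ENNReal.ofReal c * ENNReal.ofReal (gaussianDensity V (2 * u) z) :=
        setLIntegral_le_lintegral _ _
    _ = ENNReal.ofReal c := by
        rw [lintegral_const_mul' _ _ ofReal_ne_top, lintegral_gaussianDensity (by positivity),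
          mul_one]
    _ = _ := by congr 1; ring

end Gaussian

theorem setLIntegral_Ioi_le_of_le_mul_of_le_one {ν : Measure ℝ} {G : ℝ → ℝ≥0∞} {ε K : ℝ}
    (hε : 0 ≤ ε) (hK : 0 ≤ K) (hsmall : ∀ u ∈ Ioc 0 ε, G u ≤ ENNReal.ofReal (K * u))
    (hlarge : ∀ u ∈ Ioi ε, G u ≤ 1) :
    ∫⁻ u in Ioi 0, G u ∂ν
      ≤ ENNReal.ofReal K * ∫⁻ u in Ioc 0 ε, ENNReal.ofReal u ∂ν + ν (Ici ε) := by
  rw [← Ioc_union_Ioi_eq_Ioi hε, lintegral_union measurableSet_Ioi (Ioc_disjoint_Ioi le_rfl)]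
  gcongr
  · rw [← lintegral_const_mul' _ _ ofReal_ne_top]
    refine setLIntegral_mono' measurableSet_Ioc fun u hu ↦ ?_
    rw [← ofReal_mul hK]
    exact hsmall u hu
  · calc ∫⁻ u in Ioi ε, G u ∂ν
        ≤ ∫⁻ _ in Ioi ε, 1 ∂ν := setLIntegral_mono' measurableSet_Ioi hlarge
      _ = ν (Ioi ε) := setLIntegral_one _
      _ ≤ ν (Ici ε) := measure_mono Ioi_subset_Ici_self

theorem div_sq_mul_rpow_add_rpow {δ : ℝ} (hδ : 0 < δ) (A C α : ℝ) :
    A / δ ^ 2 * (C * (δ ^ 2) ^ (1 - α / 2)) + C * (δ ^ 2) ^ (-(α / 2))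
      = (A + 1) * C * δ ^ (-α) := by
  have hsq : (δ ^ 2) ^ (-(α / 2)) = δ ^ (-α) := by
    rw [← Real.rpow_natCast, ← rpow_mul hδ.le]; congr 1; push_cast; ring
  rw [sub_eq_add_neg, rpow_add (by positivity), Real.rpow_one, hsq]
  field_simp

theorem subordinated_levy_measure_large_jump_bound_general
    (d : ℕ) (α : ℝ)
    (νS : Measure ℝ) (C : ℝ) (hC : 1 ≤ C)
    (hmom : ∀ ε ∈ Set.Ioc (0:ℝ) 1,
      ∫⁻ u in Set.Ioc (0:ℝ) ε, ENNReal.ofReal u ∂νS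
        ≤ ENNReal.ofReal (C * ε ^ (1 - α / 2)))
    (htail : ∀ ε ∈ Set.Ioc (0:ℝ) 1,
      νS (Set.Ici ε) ≤ ENNReal.ofReal (C * ε ^ (-(α / 2))))
    (νL : Set (EuclideanSpace ℝ (Fin d)) → ℝ≥0∞)
    (hνL : ∀ E : Set (EuclideanSpace ℝ (Fin d)),
      νL E = ∫⁻ u in Set.Ioi (0:ℝ),
        (∫⁻ z in E,
          ENNReal.ofReal ((2 * Real.pi * u) ^ (-(d:ℝ) / 2)
            * Real.exp (-‖z‖ ^ 2 / (2 * u)))) ∂νS) :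
    ∃ C₀ : ℝ, 1 ≤ C₀ ∧ ∀ δ ∈ Set.Ioo (0:ℝ) 1,
      νL {z | δ ≤ ‖z‖} ≤ ENNReal.ofReal (C₀ * δ ^ (-α)) := by
  set A : ℝ := 4 * 2 ^ ((finrank ℝ (EuclideanSpace ℝ (Fin d)) : ℝ) / 2)
  have hA : 0 ≤ A := by positivity
  refine ⟨(A + 1) * C, by nlinarith, fun δ ⟨hδ0, hδ1⟩ ↦ ?_⟩
  have hε : δ ^ 2 ∈ Ioc 0 1 := ⟨by positivity, by nlinarith⟩
  calc νL {z | δ ≤ ‖z‖}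
      = ∫⁻ u in Ioi 0, (∫⁻ z in {z | δ ≤ ‖z‖},
          ENNReal.ofReal (gaussianDensity (EuclideanSpace ℝ (Fin d)) u z)) ∂νS := by
        simp only [hνL, gaussianDensity_euclideanSpace]
    _ ≤ ENNReal.ofReal (A / δ ^ 2) * ∫⁻ u in Ioc 0 (δ ^ 2), ENNReal.ofReal u ∂νS
          + νS (Ici (δ ^ 2)) :=
        setLIntegral_Ioi_le_of_le_mul_of_le_one hε.1.le (by positivity)
          (fun u hu ↦ setLIntegral_gaussianDensity_le_norm_le hu.1 hδ0)
          (fun u hu ↦ setLIntegral_gaussianDensity_le_one (hε.1.trans hu) _)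
    _ ≤ ENNReal.ofReal (A / δ ^ 2) * ENNReal.ofReal (C * (δ ^ 2) ^ (1 - α / 2))
          + ENNReal.ofReal (C * (δ ^ 2) ^ (-(α / 2))) := by
        gcongr
        exacts [hmom _ hε, htail _ hε]
    _ = ENNReal.ofReal ((A + 1) * C * δ ^ (-α)) := by
        rw [← ofReal_mul (by positivity), ← ofReal_add (by positivity) (by positivity),
          div_sq_mul_rpow_add_rpow hδ0]

theorem subordinated_levy_measure_large_jump_bound
    (d : ℕ) (hd : 1 ≤ d) (α : ℝ) (hα : α ∈ Set.Ioo (0:ℝ) 2)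
    (νS : Measure ℝ) (C : ℝ) (hC : 1 ≤ C)
    (hmom : ∀ ε ∈ Set.Ioc (0:ℝ) 1,
      ∫⁻ u in Set.Ioc (0:ℝ) ε, ENNReal.ofReal u ∂νS
        ≤ ENNReal.ofReal (C * ε ^ (1 - α / 2)))
    (htail : ∀ ε ∈ Set.Ioc (0:ℝ) 1,
      νS (Set.Ici ε) ≤ ENNReal.ofReal (C * ε ^ (-(α / 2))))
    (νL : Set (EuclideanSpace ℝ (Fin d)) → ℝ≥0∞)
    (hνL : ∀ E : Set (EuclideanSpace ℝ (Fin d)),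
      νL E = ∫⁻ u in Set.Ioi (0:ℝ),
        (∫⁻ z in E,
          ENNReal.ofReal ((2 * Real.pi * u) ^ (-(d:ℝ) / 2)
            * Real.exp (-‖z‖ ^ 2 / (2 * u)))) ∂νS) :
    ∃ C₀ : ℝ, 1 ≤ C₀ ∧ ∀ δ ∈ Set.Ioo (0:ℝ) 1,
      νL {z | δ ≤ ‖z‖} ≤ ENNReal.ofReal (C₀ * δ ^ (-α)) :=
  subordinated_levy_measure_large_jump_bound_general d α νS C hC hmom htail νL hνL
end

section
/- Under the same assumptions as above on ν_S and with ν_L(E) = ∫₀^∞ ∫_E (2πu)^{-d/2} e^{-|z|²/(2u)} dz ν_S(du), there exists C₁ ≥ 1 such that for all δ ∈ (0,1), ∫_{|z|≤δ} |z|² ν_L(dz) ≤ C₁ δ^{2-α}. -/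
/-!
Split the `u`-integral at `u = δ²`. For `u ≤ δ²` drop the restriction `‖z‖ ≤ δ`: the scaling
`z = √u • x` shows that the full second moment of the heat kernel at time `u` is `u` times
the one at time `1`, so the moment hypothesis bounds this part by a multiple of
`(δ²)^(1 - α/2) = δ^(2-α)`. For `u > δ²` the kernel on the ball is at most its value at
`z = 0` and time `δ²`, which is `δ⁻ᵈ` times its value at time `1`; the ball has volume of
order `δᵈ`, so the inner integral is `O(δ²)` and the tail hypothesis contributes `δ² · δ^(-α)`.
-/

open MeasureTheory Set ENNReal

open Module Metric

noncomputable def heatKernel {E : Type*} [Norm E] (n : ℕ) (u : ℝ) (z : E) : ℝ :=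
  (2 * Real.pi * u) ^ (-(n : ℝ) / 2) * Real.exp (-‖z‖ ^ 2 / (2 * u))

theorem mul_exp_neg_mul_le {b : ℝ} (hb : 0 < b) (t : ℝ) :
    t * Real.exp (-b * t) ≤ 2 / b * Real.exp (-1) * Real.exp (-(b / 2) * t) := by
  have hexp : Real.exp (-b * t) = Real.exp (-(b / 2 * t)) * Real.exp (-(b / 2) * t) := by
    rw [← Real.exp_add]; ring_nf
  have hsplit : t * Real.exp (-b * t)
      = 2 / b * (b / 2 * t * Real.exp (-(b / 2 * t))) * Real.exp (-(b / 2) * t) := by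
    rw [hexp]; field_simp
  rw [hsplit]
  gcongr
  exact Real.mul_exp_neg_le_exp_neg_one _

section HeatKernel

variable {E : Type*} [NormedAddCommGroup E] {n : ℕ}

theorem heatKernel_nonneg {u : ℝ} (hu : 0 ≤ u) (z : E) : 0 ≤ heatKernel n u z := by
  unfold heatKernel; positivity

theorem heatKernel_le_heatKernel_zero {u : ℝ} (hu : 0 < u) (z : E) :
    heatKernel n u z ≤ heatKernel n u (0 : E) := by
  unfold heatKernel
  gcongr
  simp

theorem heatKernel_zero_le_of_le {u v : ℝ} (hv : 0 < v) (hvu : v ≤ u) :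
    heatKernel n u (0 : E) ≤ heatKernel n v (0 : E) := by
  simp only [heatKernel, norm_zero, zero_pow two_ne_zero, neg_zero, zero_div, Real.exp_zero,
    mul_one]
  refine Real.rpow_le_rpow_of_nonpos (by positivity) (by gcongr) ?_
  have : (0 : ℝ) ≤ n := n.cast_nonneg
  linarith

theorem heatKernel_sq_smul [NormedSpace ℝ E] {r : ℝ} (hr : 0 < r) (x : E) :
    heatKernel n (r ^ 2) (r • x) = (r ^ n)⁻¹ * heatKernel n 1 x := by
  have hexp : -‖r • x‖ ^ 2 / (2 * r ^ 2) = -‖x‖ ^ 2 / (2 * 1) := by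
    rw [norm_smul, Real.norm_of_nonneg hr.le]; field_simp
  have hpow : (2 * Real.pi * r ^ 2) ^ (-(n : ℝ) / 2)
      = (r ^ n)⁻¹ * (2 * Real.pi * 1) ^ (-(n : ℝ) / 2) := by
    rw [mul_one, mul_comm, Real.mul_rpow (by positivity) (by positivity), ← Real.rpow_natCast r n,
      ← Real.rpow_neg hr.le, ← Real.rpow_natCast_mul hr.le]
    congr 2; push_cast; ring
  rw [heatKernel, heatKernel, hexp, hpow, mul_assoc]

end HeatKernel

section InnerProductSpace

variable {E : Type*} [NormedAddCommGroup E] [InnerProductSpace ℝ E] [FiniteDimensional ℝ E]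
  [MeasurableSpace E] [BorelSpace E]

theorem integrable_exp_neg_mul_sq_norm {b : ℝ} (hb : 0 < b) :
    Integrable fun x : E => Real.exp (-b * ‖x‖ ^ 2) :=
  -- the Bochner integral of a non-integrable function is `0`, and this one is `(π / b) ^ (d / 2)`
  .of_integral_ne_zero (by rw [GaussianFourier.integral_rexp_neg_mul_sq_norm hb]; positivity)

theorem integrable_sq_norm_mul_exp_neg_mul_sq_norm {b : ℝ} (hb : 0 < b) :
    Integrable fun x : E => ‖x‖ ^ 2 * Real.exp (-b * ‖x‖ ^ 2) := by
  refine ((integrable_exp_neg_mul_sq_norm (half_pos hb)).const_mul (2 / b * Real.exp (-1))).mono'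
    (by fun_prop) (.of_forall fun x => ?_)
  rw [Real.norm_of_nonneg (by positivity)]
  exact mul_exp_neg_mul_le hb _

theorem integrable_sq_norm_mul_heatKernel (n : ℕ) {u : ℝ} (hu : 0 < u) :
    Integrable fun x : E => ‖x‖ ^ 2 * heatKernel n u x := by
  have hb : 0 < 1 / (2 * u) := by positivity
  refine ((integrable_sq_norm_mul_exp_neg_mul_sq_norm hb).const_mul
    ((2 * Real.pi * u) ^ (-(n : ℝ) / 2))).congr (.of_forall fun x => ?_)
  simp only [heatKernel]
  rw [show -‖x‖ ^ 2 / (2 * u) = -(1 / (2 * u)) * ‖x‖ ^ 2 by ring]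
  ring

end InnerProductSpace

section AddHaar

variable {E : Type*} [NormedAddCommGroup E] [NormedSpace ℝ E] [FiniteDimensional ℝ E]
  [MeasurableSpace E] [BorelSpace E] (μ : Measure E) [μ.IsAddHaarMeasure]

theorem lintegral_comp_smul_of_pos (f : E → ℝ≥0∞) {r : ℝ} (hr : 0 < r) :
    ∫⁻ x, f (r • x) ∂μ = ENNReal.ofReal ((r ^ finrank ℝ E)⁻¹) * ∫⁻ x, f x ∂μ := by
  let e := (Homeomorph.smulOfNeZero (α := E) r hr.ne').toMeasurableEquiv
  rw [← abs_of_pos (inv_pos.2 (pow_pos hr _)), ← smul_eq_mul, ← lintegral_smul_measure,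
    ← Measure.map_addHaar_smul μ hr.ne']
  exact (lintegral_map_equiv f e).symm

theorem lintegral_sq_norm_mul_heatKernel {n : ℕ} (hn : finrank ℝ E = n) {u : ℝ}
    (hu : 0 < u) :
    ∫⁻ z, ENNReal.ofReal (‖z‖ ^ 2 * heatKernel n u z) ∂μ
      = ENNReal.ofReal u * ∫⁻ x, ENNReal.ofReal (‖x‖ ^ 2 * heatKernel n 1 x) ∂μ := by
  set r := Real.sqrt u
  have hr : 0 < r := Real.sqrt_pos.2 hu
  have hru : r ^ 2 = u := Real.sq_sqrt hu.le
  have hscale : ∀ x : E, ENNReal.ofReal (‖r • x‖ ^ 2 * heatKernel n u (r • x))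
      = ENNReal.ofReal ((r ^ n)⁻¹)
        * (ENNReal.ofReal u * ENNReal.ofReal (‖x‖ ^ 2 * heatKernel n 1 x)) := by
    intro x
    rw [← hru, heatKernel_sq_smul hr, norm_smul, Real.norm_of_nonneg hr.le,
      ← ENNReal.ofReal_mul (by positivity), ← ENNReal.ofReal_mul (by positivity)]
    ring_nf
  have h := lintegral_comp_smul_of_pos μ
    (fun z => ENNReal.ofReal (‖z‖ ^ 2 * heatKernel n u z)) hr
  simp only [hscale, hn] at h
  rw [lintegral_const_mul' _ _ ofReal_ne_top, lintegral_const_mul' _ _ ofReal_ne_top] at h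
  exact (ENNReal.mul_right_inj (ofReal_pos.2 (by positivity)).ne' ofReal_ne_top).1 h.symm

theorem setLIntegral_sq_norm_mul_heatKernel_le {n : ℕ} (hn : finrank ℝ E = n) {δ u : ℝ}
    (hδ : 0 < δ) (hu : δ ^ 2 ≤ u) :
    ∫⁻ z in {z : E | ‖z‖ ≤ δ}, ENNReal.ofReal (‖z‖ ^ 2 * heatKernel n u z) ∂μ
      ≤ ENNReal.ofReal (δ ^ 2)
        * (ENNReal.ofReal (heatKernel n 1 (0 : E)) * μ (closedBall 0 1)) := by
  have hu0 : 0 < u := (pow_pos hδ 2).trans_le hu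
  have hball : {z : E | ‖z‖ ≤ δ} = closedBall 0 δ := by ext; simp
  have hbound : ∀ z ∈ {z : E | ‖z‖ ≤ δ}, ENNReal.ofReal (‖z‖ ^ 2 * heatKernel n u z)
      ≤ ENNReal.ofReal (δ ^ 2 * ((δ ^ n)⁻¹ * heatKernel n 1 (0 : E))) := by
    intro z hz
    rw [← heatKernel_sq_smul hδ, smul_zero]
    refine ENNReal.ofReal_le_ofReal
      (mul_le_mul ?_ ?_ (heatKernel_nonneg hu0.le _) (by positivity))
    · exact pow_le_pow_left₀ (norm_nonneg z) hz 2
    · exact (heatKernel_le_heatKernel_zero hu0 z).trans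
        (heatKernel_zero_le_of_le (by positivity) hu)
  have hk₀ : 0 ≤ heatKernel n 1 (0 : E) := heatKernel_nonneg zero_le_one _
  calc ∫⁻ z in {z : E | ‖z‖ ≤ δ}, ENNReal.ofReal (‖z‖ ^ 2 * heatKernel n u z) ∂μ
      ≤ ∫⁻ _ in {z : E | ‖z‖ ≤ δ},
          ENNReal.ofReal (δ ^ 2 * ((δ ^ n)⁻¹ * heatKernel n 1 (0 : E))) ∂μ :=
        setLIntegral_mono' (hball ▸ measurableSet_closedBall) hbound
    _ = ENNReal.ofReal (δ ^ 2 * ((δ ^ n)⁻¹ * heatKernel n 1 (0 : E)))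
          * (ENNReal.ofReal (δ ^ n) * μ (closedBall 0 1)) := by
      rw [setLIntegral_const, hball, Measure.addHaar_closedBall' μ _ hδ.le, hn]
    _ = _ := by
      rw [← mul_assoc, ← ENNReal.ofReal_mul (by positivity), ← mul_assoc (ENNReal.ofReal _),
        ← ENNReal.ofReal_mul (by positivity)]
      congr 2
      field_simp

end AddHaar

theorem setLIntegral_Ioi_le_of_le_mul_of_le (ν : Measure ℝ) {F : ℝ → ℝ≥0∞} {ε : ℝ}
    {M K : ℝ≥0∞} (hε : 0 ≤ ε) (hsmall : ∀ u ∈ Ioc 0 ε, F u ≤ M * ENNReal.ofReal u)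
    (hlarge : ∀ u ∈ Ioi ε, F u ≤ K) :
    ∫⁻ u in Ioi 0, F u ∂ν ≤ M * ∫⁻ u in Ioc 0 ε, ENNReal.ofReal u ∂ν + K * ν (Ioi ε) := by
  rw [← Ioc_union_Ioi_eq_Ioi hε, lintegral_union measurableSet_Ioi Ioc_disjoint_Ioi_same]
  gcongr ?_ + ?_
  · exact (setLIntegral_mono' measurableSet_Ioc hsmall).trans_eq
      (lintegral_const_mul _ ENNReal.measurable_ofReal)
  · exact (setLIntegral_mono' measurableSet_Ioi hlarge).trans_eq (setLIntegral_const _ _)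

theorem subordinated_levy_measure_small_jump_bound_general
    (d : ℕ) (α : ℝ)
    (νS : Measure ℝ) (C : ℝ)
    (hmom : ∀ ε ∈ Set.Ioc (0:ℝ) 1,
      ∫⁻ u in Set.Ioc (0:ℝ) ε, ENNReal.ofReal u ∂νS
        ≤ ENNReal.ofReal (C * ε ^ (1 - α / 2)))
    (htail : ∀ ε ∈ Set.Ioc (0:ℝ) 1,
      νS (Set.Ici ε) ≤ ENNReal.ofReal (C * ε ^ (-(α / 2)))) :
    ∃ C₁ : ℝ, 1 ≤ C₁ ∧ ∀ δ ∈ Set.Ioo (0:ℝ) 1,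
      (∫⁻ u in Set.Ioi (0:ℝ),
        (∫⁻ z in {z : EuclideanSpace ℝ (Fin d) | ‖z‖ ≤ δ},
          ENNReal.ofReal (‖z‖ ^ 2 * ((2 * Real.pi * u) ^ (-(d:ℝ) / 2)
            * Real.exp (-‖z‖ ^ 2 / (2 * u))))) ∂νS)
        ≤ ENNReal.ofReal (C₁ * δ ^ (2 - α)) := by
  set E := EuclideanSpace ℝ (Fin d)
  have hn : finrank ℝ E = d := finrank_euclideanSpace_fin
  set M := ∫⁻ x : E, ENNReal.ofReal (‖x‖ ^ 2 * heatKernel d 1 x)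
  set K := ENNReal.ofReal (heatKernel d 1 (0 : E)) * volume (closedBall (0 : E) 1)
  have hMK : M + K ≠ ⊤ :=
    add_ne_top.2 ⟨(integrable_sq_norm_mul_heatKernel d one_pos).lintegral_lt_top.ne,
      mul_ne_top ofReal_ne_top measure_closedBall_lt_top.ne⟩
  refine ⟨max 1 ((M + K).toReal * C), le_max_left _ _, fun δ ⟨hδ0, hδ1⟩ => ?_⟩
  have hε : δ ^ 2 ∈ Ioc 0 1 := ⟨by positivity, by nlinarith⟩
  have hmom_pow : (δ ^ 2) ^ (1 - α / 2) = δ ^ (2 - α) := by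
    rw [← Real.rpow_natCast_mul hδ0.le]; push_cast; ring_nf
  have htail_pow : δ ^ 2 * (C * (δ ^ 2) ^ (-(α / 2))) = C * δ ^ (2 - α) := by
    rw [← hmom_pow, sub_eq_add_neg, Real.rpow_add (by positivity), Real.rpow_one]; ring
  calc _ ≤ M * ∫⁻ u in Ioc 0 (δ ^ 2), ENNReal.ofReal u ∂νS
          + ENNReal.ofReal (δ ^ 2) * K * νS (Ioi (δ ^ 2)) :=
        setLIntegral_Ioi_le_of_le_mul_of_le νS hε.1.le
          (fun u hu => ((setLIntegral_le_lintegral _ _).trans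
            (lintegral_sq_norm_mul_heatKernel volume hn hu.1).le).trans_eq (mul_comm _ _))
          (fun u hu => setLIntegral_sq_norm_mul_heatKernel_le volume hn hδ0 hu.le)
    _ ≤ M * ENNReal.ofReal (C * (δ ^ 2) ^ (1 - α / 2))
          + ENNReal.ofReal (δ ^ 2) * K * ENNReal.ofReal (C * (δ ^ 2) ^ (-(α / 2))) := by
        gcongr
        exacts [hmom _ hε, (measure_mono Ioi_subset_Ici_self).trans (htail _ hε)]
    _ = ENNReal.ofReal ((M + K).toReal * C * δ ^ (2 - α)) := by
        rw [mul_right_comm (ENNReal.ofReal (δ ^ 2)), ← ENNReal.ofReal_mul (sq_nonneg δ),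
          htail_pow, hmom_pow, mul_assoc, ENNReal.ofReal_mul toReal_nonneg, ofReal_toReal hMK]
        ring
    _ ≤ ENNReal.ofReal (max 1 ((M + K).toReal * C) * δ ^ (2 - α)) :=
        ENNReal.ofReal_le_ofReal
          (mul_le_mul_of_nonneg_right (le_max_right _ _) (by positivity))

theorem subordinated_levy_measure_small_jump_bound
    (d : ℕ) (hd : 1 ≤ d) (α : ℝ) (hα : α ∈ Set.Ioo (0:ℝ) 2)
    (νS : Measure ℝ) (C : ℝ) (hC : 1 ≤ C)
    (hmom : ∀ ε ∈ Set.Ioc (0:ℝ) 1,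
      ∫⁻ u in Set.Ioc (0:ℝ) ε, ENNReal.ofReal u ∂νS
        ≤ ENNReal.ofReal (C * ε ^ (1 - α / 2)))
    (htail : ∀ ε ∈ Set.Ioc (0:ℝ) 1,
      νS (Set.Ici ε) ≤ ENNReal.ofReal (C * ε ^ (-(α / 2)))) :
    ∃ C₁ : ℝ, 1 ≤ C₁ ∧ ∀ δ ∈ Set.Ioo (0:ℝ) 1,
      (∫⁻ u in Set.Ioi (0:ℝ),
        (∫⁻ z in {z : EuclideanSpace ℝ (Fin d) | ‖z‖ ≤ δ},
          ENNReal.ofReal (‖z‖ ^ 2 * ((2 * Real.pi * u) ^ (-(d:ℝ) / 2)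
            * Real.exp (-‖z‖ ^ 2 / (2 * u))))) ∂νS)
        ≤ ENNReal.ofReal (C₁ * δ ^ (2 - α)) :=
  subordinated_levy_measure_small_jump_bound_general d α νS C hmom htail
end
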